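/- arXiv:1410.1581 — 2 statements merged into one kernel-verified Lean document; each statement's English description precedes it below -/
import Mathlib

section
/- For the d-dimensional heat kernel and the Riesz kernel f(x) = |x|^{-β} with 0 < β < min(2,d), for every fixed nonzero w ∈ ℝ^d there is a constant C > 0 (depending on d, β) such that for all ε > 0, ∫_0^ε ∫_{ℝ^d} ∫_{ℝ^d} p_r(x) p_r(y + w) |x - y|^{-β} dx dy dr ≤ C ε |w|^{-β}. -/
/-!
Split the Riesz kernel as `‖z‖ ^ (-β) ≤ (‖w‖ / 2) ^ (-β) + k z`, where `k` is its restriction to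
the ball of radius `‖w‖ / 2`, integrable because `β < d`. Since `p_r` has mass one, the constant
part contributes at most `(‖w‖ / 2) ^ (-β)`. Where `k (x - y) ≠ 0`, one of `‖x‖`, `‖y + w‖` is at
least `‖w‖ / 4`, and there `p_r ≤ A` uniformly in `r > 0` (as `t ^ (d / 2) * exp (-t)` is
bounded); so `p_r x * p_r (y + w) ≤ A * (p_r x + p_r (y + w))` and the singular part contributes
at most `2 * A * ∫ k`. The spatial integral is therefore bounded uniformly in `r`, and integrating
over `r ∈ (0, ε]` gives the bound linear in `ε`.
-/

open MeasureTheory Real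

noncomputable def heatKernel (d : ℕ) (r : ℝ) (x : EuclideanSpace ℝ (Fin d)) : ℝ :=
  (2 * Real.pi * r) ^ (-(d : ℝ) / 2) * Real.exp (-‖x‖ ^ 2 / (2 * r))

open Set Metric
open scoped Nat Convolution

section

variable {G : Type*} [AddCommGroup G] [MeasurableSpace G] [MeasurableAdd₂ G] [MeasurableNeg G]
  {μ : Measure G} [SFinite μ] [μ.IsAddLeftInvariant] [μ.IsNegInvariant]

theorem integral_integral_le_of_le_mul_add_mul_sub {g : G → G → ℝ} {p q k : G → ℝ} {c A : ℝ}
    (hp : Integrable p μ) (hq : Integrable q μ) (hk : Integrable k μ) (hg : ∀ x y, 0 ≤ g x y)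
    (hgle : ∀ x y, g x y ≤ c * p x * q y + A * (p x + q y) * k (x - y)) :
    ∫ x, ∫ y, g x y ∂μ ∂μ ≤
      c * (∫ x, p x ∂μ) * (∫ y, q y ∂μ) + A * ((∫ x, p x ∂μ) + ∫ y, q y ∂μ) * ∫ z, k z ∂μ := by
  set L := ContinuousLinearMap.mul ℝ ℝ
  have hinner : ∀ᵐ x ∂μ, ∫ y, g x y ∂μ ≤
      (c * (∫ y, q y ∂μ) + A * ∫ z, k z ∂μ) * p x + A * (q ⋆[L, μ] k) x := by
    filter_upwards [hq.ae_convolution_exists L hk] with x hx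
    have hqk : Integrable (fun y => q y * k (x - y)) μ := hx
    have hkx : Integrable (fun y => k (x - y)) μ := hk.comp_sub_left x
    calc ∫ y, g x y ∂μ
        ≤ ∫ y, (c * p x * q y + A * p x * k (x - y) + A * (q y * k (x - y))) ∂μ :=
          integral_mono_of_nonneg (ae_of_all _ (hg x))
            (((hq.const_mul _).fun_add (hkx.const_mul _)).fun_add (hqk.const_mul A))
            (ae_of_all _ fun y => (hgle x y).trans_eq (by ring))
      _ = (c * (∫ y, q y ∂μ) + A * ∫ z, k z ∂μ) * p x + A * (q ⋆[L, μ] k) x := by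
          rw [integral_add ((hq.const_mul (c * p x)).fun_add (hkx.const_mul (A * p x)))
              (hqk.const_mul A), integral_add (hq.const_mul _) (hkx.const_mul _),
            integral_const_mul, integral_const_mul, integral_const_mul,
            integral_sub_left_eq_self k μ x, convolution_def]
          simp only [L, ContinuousLinearMap.mul_apply']
          ring
  calc ∫ x, ∫ y, g x y ∂μ ∂μ
      ≤ ∫ x, ((c * (∫ y, q y ∂μ) + A * ∫ z, k z ∂μ) * p x + A * (q ⋆[L, μ] k) x) ∂μ :=
        integral_mono_of_nonneg (ae_of_all _ fun x => integral_nonneg (hg x))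
          ((hp.const_mul _).fun_add ((hq.integrable_convolution L hk).const_mul A)) hinner
    _ = _ := by
        rw [integral_add (hp.const_mul _) ((hq.integrable_convolution L hk).const_mul A),
          integral_const_mul, integral_const_mul, integral_convolution L hq hk]
        simp only [L, ContinuousLinearMap.mul_apply']
        ring

end

theorem rpow_mul_exp_neg_le {s t : ℝ} (n : ℕ) (hs : 0 ≤ s) (hsn : s ≤ n) (ht : 0 ≤ t) :
    t ^ s * exp (-t) ≤ 1 + n ! := by
  have hpow : t ^ s ≤ 1 + t ^ n := by
    rcases le_or_gt t 1 with h | h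
    · linarith [rpow_le_one ht h hs, pow_nonneg ht n]
    · have := rpow_le_rpow_of_exponent_le h.le hsn
      rw [rpow_natCast] at this
      linarith
  have hfac : t ^ n * exp (-t) ≤ n ! := by
    have := pow_div_factorial_le_exp t ht n
    rw [div_le_iff₀ (by positivity)] at this
    rw [exp_neg, ← div_eq_mul_inv, div_le_iff₀ (exp_pos t)]
    linarith
  calc t ^ s * exp (-t) ≤ (1 + t ^ n) * exp (-t) := by gcongr
    _ = exp (-t) + t ^ n * exp (-t) := by ring
    _ ≤ 1 + n ! := add_le_add (exp_le_one_iff.2 (by linarith)) hfac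

theorem heatKernel_nonneg (d : ℕ) {r : ℝ} (hr : 0 ≤ r) (x : EuclideanSpace ℝ (Fin d)) :
    0 ≤ heatKernel d r x := by
  unfold heatKernel
  positivity

theorem heatKernel_eq_rexp_neg_mul_sq_norm (d : ℕ) (r : ℝ) :
    heatKernel d r = fun x => (2 * π * r) ^ (-(d : ℝ) / 2) * rexp (-(2 * r)⁻¹ * ‖x‖ ^ 2) := by
  ext x
  unfold heatKernel
  congr 2
  ring

theorem integral_heatKernel (d : ℕ) {r : ℝ} (hr : 0 < r) :
    ∫ x, heatKernel d r x = 1 := by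
  rw [heatKernel_eq_rexp_neg_mul_sq_norm, integral_const_mul,
    GaussianFourier.integral_rexp_neg_mul_sq_norm (by positivity), finrank_euclideanSpace_fin,
    show π / (2 * r)⁻¹ = 2 * π * r by field_simp, ← rpow_add (by positivity), neg_div,
    neg_add_cancel, rpow_zero]

theorem integrable_heatKernel (d : ℕ) {r : ℝ} (hr : 0 < r) : Integrable (heatKernel d r) := by
  refine .of_integral_ne_zero ?_
  rw [integral_heatKernel d hr]
  exact one_ne_zero

theorem exists_heatKernel_le_of_le_norm (d : ℕ) {ρ : ℝ} (hρ : 0 < ρ) :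
    ∃ A, 0 ≤ A ∧ ∀ r, 0 < r → ∀ x : EuclideanSpace ℝ (Fin d), ρ ≤ ‖x‖ → heatKernel d r x ≤ A := by
  refine ⟨(π * ρ ^ 2) ^ (-(d : ℝ) / 2) * (1 + d !), by positivity, fun r hr x hx => ?_⟩
  set t := ρ ^ 2 / (2 * r)
  have hscale : (2 * π * r) ^ (-(d : ℝ) / 2) =
      (π * ρ ^ 2) ^ (-(d : ℝ) / 2) * t ^ ((d : ℝ) / 2) := by
    rw [show 2 * π * r = π * ρ ^ 2 * t⁻¹ by simp only [t]; field_simp,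
      mul_rpow (by positivity) (by positivity), inv_rpow (by positivity),
      ← rpow_neg (by positivity), neg_div, neg_neg]
  calc heatKernel d r x ≤ (2 * π * r) ^ (-(d : ℝ) / 2) * exp (-t) := by
        unfold heatKernel
        gcongr
        rw [neg_div]
        simp only [t]
        gcongr
    _ = (π * ρ ^ 2) ^ (-(d : ℝ) / 2) * (t ^ ((d : ℝ) / 2) * exp (-t)) := by rw [hscale]; ring
    _ ≤ (π * ρ ^ 2) ^ (-(d : ℝ) / 2) * (1 + d !) := by
        gcongr
        exact rpow_mul_exp_neg_le d (by positivity) (half_le_self (by positivity)) (by positivity)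

theorem rpow_neg_norm_le_add_indicator {E : Type*} [SeminormedAddCommGroup E] {β R : ℝ}
    (hβ : 0 ≤ β) (hR : 0 < R) (z : E) :
    ‖z‖ ^ (-β) ≤ R ^ (-β) + (ball 0 R).indicator (fun z => ‖z‖ ^ (-β)) z := by
  by_cases hz : z ∈ ball (0 : E) R
  · rw [indicator_of_mem hz]
    linarith [rpow_nonneg hR.le (-β)]
  · rw [indicator_of_notMem hz, add_zero]
    exact rpow_le_rpow_of_nonpos hR (by simpa using hz) (by linarith)

theorem integrable_indicator_ball_rpow_neg_norm {E : Type*} [NormedAddCommGroup E]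
    [NormedSpace ℝ E] [FiniteDimensional ℝ E] [MeasurableSpace E] [BorelSpace E]
    (μ : Measure E) [μ.IsAddHaarMeasure] (hE : 1 ≤ Module.finrank ℝ E) {β : ℝ}
    (hβ : β < Module.finrank ℝ E) (R : ℝ) :
    Integrable ((ball (0 : E) R).indicator fun z => ‖z‖ ^ (-β)) μ :=
  (integrableOn_ball_of_norm_le_rpow (C := 1) hE hβ
    (ae_of_all _ fun z => by rw [one_mul, norm_of_nonneg (rpow_nonneg (norm_nonneg z) _)])
    (measurable_norm.pow_const _).aestronglyMeasurable).integrable_indicator measurableSet_ball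

theorem mul_mul_rpow_neg_norm_sub_le {E : Type*} [NormedAddCommGroup E] {p : E → ℝ} {w : E}
    {β A : ℝ} (hβ : 0 ≤ β) (hw : w ≠ 0) (hp : ∀ z, 0 ≤ p z)
    (hpA : ∀ z, ‖w‖ / 4 ≤ ‖z‖ → p z ≤ A) (x y : E) :
    p x * p (y + w) * ‖x - y‖ ^ (-β) ≤ (‖w‖ / 2) ^ (-β) * p x * p (y + w) +
      A * (p x + p (y + w)) * (ball 0 (‖w‖ / 2)).indicator (fun z => ‖z‖ ^ (-β)) (x - y) := by
  set k := (ball (0 : E) (‖w‖ / 2)).indicator fun z => ‖z‖ ^ (-β)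
  have hw' : 0 < ‖w‖ := norm_pos_iff.2 hw
  have hnear : p x * p (y + w) * k (x - y) ≤ A * (p x + p (y + w)) * k (x - y) := by
    by_cases hxy : x - y ∈ ball (0 : E) (‖w‖ / 2)
    · have hk : 0 ≤ k (x - y) := by simp only [k, indicator_of_mem hxy]; positivity
      have hfar : ‖w‖ / 4 ≤ ‖x‖ ∨ ‖w‖ / 4 ≤ ‖y + w‖ := by
        have : ‖w‖ ≤ ‖x‖ + ‖x - y‖ + ‖y + w‖ := by
          calc ‖w‖ = ‖-x + (x - y) + (y + w)‖ := by congr 1; abel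
            _ ≤ _ := (norm_add₃_le).trans_eq (by rw [norm_neg])
        rw [mem_ball_zero_iff] at hxy
        by_contra! h
        linarith [h.1, h.2]
      refine mul_le_mul_of_nonneg_right ?_ hk
      rcases hfar with h | h
      · nlinarith [hpA _ h, hp x, hp (y + w)]
      · nlinarith [hpA _ h, hp x, hp (y + w)]
    · simp [k, indicator_of_notMem hxy]
  calc p x * p (y + w) * ‖x - y‖ ^ (-β)
      ≤ p x * p (y + w) * ((‖w‖ / 2) ^ (-β) + k (x - y)) :=
        mul_le_mul_of_nonneg_left (rpow_neg_norm_le_add_indicator hβ (by positivity) _)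
          (mul_nonneg (hp x) (hp _))
    _ = (‖w‖ / 2) ^ (-β) * p x * p (y + w) + p x * p (y + w) * k (x - y) := by ring
    _ ≤ _ := by linarith

theorem exists_integral_integral_heatKernel_mul_rpow_neg_le {d : ℕ} (hd : 1 ≤ d) {β : ℝ}
    (hβ0 : 0 ≤ β) (hβd : β < d) {w : EuclideanSpace ℝ (Fin d)} (hw : w ≠ 0) :
    ∃ M, 0 < M ∧ ∀ r, 0 < r →
      ∫ x, ∫ y, heatKernel d r x * heatKernel d r (y + w) * ‖x - y‖ ^ (-β) ≤ M := by
  obtain ⟨A, hA0, hA⟩ := exists_heatKernel_le_of_le_norm d (by positivity : 0 < ‖w‖ / 4)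
  set k := (ball (0 : EuclideanSpace ℝ (Fin d)) (‖w‖ / 2)).indicator fun z => ‖z‖ ^ (-β)
  have hk : Integrable k := integrable_indicator_ball_rpow_neg_norm volume
    (by rwa [finrank_euclideanSpace_fin]) (by rwa [finrank_euclideanSpace_fin]) _
  have hk0 : 0 ≤ ∫ z, k z := integral_nonneg fun z => indicator_nonneg (fun z _ => by positivity) z
  refine ⟨(‖w‖ / 2) ^ (-β) + 2 * A * ∫ z, k z, by positivity, fun r hr => ?_⟩
  have hp := integrable_heatKernel d hr
  calc _ ≤ _ := integral_integral_le_of_le_mul_add_mul_sub hp (hp.comp_add_right w) hk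
        (fun x y => mul_nonneg (mul_nonneg (heatKernel_nonneg d hr.le x)
          (heatKernel_nonneg d hr.le _)) (by positivity))
        (mul_mul_rpow_neg_norm_sub_le hβ0 hw (heatKernel_nonneg d hr.le) (hA r hr))
    _ = _ := by
        rw [integral_add_right_eq_self (heatKernel d r) w, integral_heatKernel d hr]
        ring

theorem stmt1 (d : ℕ) (hd : 1 ≤ d) (β : ℝ) (hβ0 : 0 < β) (hβ : β < min 2 (d : ℝ))
    (w : EuclideanSpace ℝ (Fin d)) (hw : w ≠ 0) :
    ∃ C : ℝ, 0 < C ∧ ∀ ε : ℝ, 0 < ε →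
      ∫ r in Set.Ioc (0 : ℝ) ε,
        ∫ x : EuclideanSpace ℝ (Fin d), ∫ y : EuclideanSpace ℝ (Fin d),
          heatKernel d r x * heatKernel d r (y + w) * ‖x - y‖ ^ (-β)
        ≤ C * ε * ‖w‖ ^ (-β) := by
  obtain ⟨M, hM0, hM⟩ := exists_integral_integral_heatKernel_mul_rpow_neg_le hd hβ0.le
    (hβ.trans_le (min_le_right _ _)) hw
  have hw' : 0 < ‖w‖ := norm_pos_iff.2 hw
  refine ⟨M * ‖w‖ ^ β, by positivity, fun ε hε => ?_⟩
  have hbound : ∀ r ∈ Ioc 0 ε, ‖∫ x : EuclideanSpace ℝ (Fin d), ∫ y : EuclideanSpace ℝ (Fin d),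
      heatKernel d r x * heatKernel d r (y + w) * ‖x - y‖ ^ (-β)‖ ≤ M := fun r hr => by
    rw [norm_of_nonneg (integral_nonneg fun x => integral_nonneg fun y =>
      mul_nonneg (mul_nonneg (heatKernel_nonneg d hr.1.le x) (heatKernel_nonneg d hr.1.le _))
        (by positivity))]
    exact hM r hr.1
  calc _ ≤ ‖_‖ := le_norm_self _
    _ ≤ M * volume.real (Ioc 0 ε) := norm_setIntegral_le_of_norm_le_const measure_Ioc_lt_top hbound
    _ = M * ‖w‖ ^ β * ε * ‖w‖ ^ (-β) := by
        rw [Real.volume_real_Ioc_of_le hε.le, sub_zero, rpow_neg hw'.le]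
        field_simp
end

section
/- Let max(d−2,0) < α < d with d ∈ {1,2,3}. There exists C > 0 such that for all 0 < ε < 1, ∫_0^ε ∫_{ℝ^d} (sin(r|ξ|))²/|ξ|² · (1 + |ξ|²)^{−α/2} dξ dr ≥ C ε^{α + 3 − d}. -/
/-!
For `r ≤ ε < 1` and `‖ξ‖ ≤ ε⁻¹` we have `r‖ξ‖ ≤ 1 ≤ π / 2`, so Jordan's inequality gives
`sin (r‖ξ‖)² / ‖ξ‖² ≥ (2r/π)²`, while `1 + ‖ξ‖² ≤ 2ε⁻²` gives `(1 + ‖ξ‖²)^(-α/2) ≥ 2^(-α/2) ε^α`.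
The ball of radius `ε⁻¹` has volume proportional to `ε^(-d)`, and `∫₀^ε r² dr = ε³/3`.
The bound `sin (r x)² / x² ≤ (1 + r²) / (1 + x²)` and `α + 2 > d` make all the integrals
involved finite, so that none of them is a junk zero.
-/

open MeasureTheory Real Metric Set Module

lemma sin_mul_sq_div_sq_le (r x : ℝ) : sin (r * x) ^ 2 / x ^ 2 ≤ (1 + r ^ 2) / (1 + x ^ 2) := by
  rcases eq_or_ne x 0 with rfl | hx
  · rw [zero_pow two_ne_zero, div_zero]
    positivity
  have hsin_le : sin (r * x) ^ 2 ≤ (r * x) ^ 2 := by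
    rw [← sq_abs, ← sq_abs (r * x)]
    exact pow_le_pow_left₀ (abs_nonneg _) abs_sin_le_abs 2
  rw [div_le_div_iff₀ (by positivity) (by positivity)]
  nlinarith [sin_sq_le_one (r * x), sq_nonneg x]

lemma sq_le_sin_mul_sq_div_sq {r x : ℝ} (hr : 0 ≤ r) (hx : 0 < x) (hrx : r * x ≤ π / 2) :
    (2 / π * r) ^ 2 ≤ sin (r * x) ^ 2 / x ^ 2 := by
  have hjordan : 2 / π * (r * x) ≤ sin (r * x) := mul_le_sin (by positivity) hrx
  rw [le_div_iff₀ (by positivity), ← mul_pow, mul_assoc]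
  exact pow_le_pow_left₀ (by positivity) hjordan 2

section

variable {E : Type*} [NormedAddCommGroup E]

/-- `|𝓕 Γ(r)(ξ)|²` against the spectral density of the Bessel kernel of order `α`. -/
noncomputable def waveBesselIntegrand (α r : ℝ) (ξ : E) : ℝ :=
  sin (r * ‖ξ‖) ^ 2 / ‖ξ‖ ^ 2 * (1 + ‖ξ‖ ^ 2) ^ (-α / 2)

lemma waveBesselIntegrand_nonneg (α r : ℝ) (ξ : E) : 0 ≤ waveBesselIntegrand α r ξ := by
  unfold waveBesselIntegrand; positivity

lemma waveBesselIntegrand_le (α r : ℝ) (ξ : E) :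
    waveBesselIntegrand α r ξ ≤ (1 + r ^ 2) * (1 + ‖ξ‖ ^ 2) ^ (-(α + 2) / 2) := by
  have hpos : (0 : ℝ) < 1 + ‖ξ‖ ^ 2 := by positivity
  have hsplit : (1 + ‖ξ‖ ^ 2) ^ (-(α + 2) / 2) = (1 + ‖ξ‖ ^ 2) ^ (-α / 2) / (1 + ‖ξ‖ ^ 2) := by
    rw [show -(α + 2) / 2 = -α / 2 - 1 by ring, rpow_sub_one hpos.ne']
  rw [waveBesselIntegrand, hsplit, ← mul_div_assoc, mul_div_right_comm]
  exact mul_le_mul_of_nonneg_right (sin_mul_sq_div_sq_le r ‖ξ‖) (by positivity)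

lemma le_waveBesselIntegrand {α ε r : ℝ} (hα : 0 ≤ α) (hε : 0 < ε) (hε1 : ε ≤ 1)
    (hr : 0 ≤ r) (hrε : r ≤ ε) {ξ : E} (hξ : ξ ∈ closedBall (0 : E) ε⁻¹ \ {0}) :
    (2 / π * r) ^ 2 * (2 ^ (-α / 2) * ε ^ α) ≤ waveBesselIntegrand α r ξ := by
  obtain ⟨hξR, hξ0⟩ := hξ
  rw [mem_closedBall_zero_iff] at hξR
  have hξpos : 0 < ‖ξ‖ := norm_pos_iff.mpr hξ0
  have hrξ : r * ‖ξ‖ ≤ 1 :=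
    calc r * ‖ξ‖ ≤ ε * ε⁻¹ := mul_le_mul hrε hξR hξpos.le hε.le
      _ = 1 := mul_inv_cancel₀ hε.ne'
  have hbracket : 1 + ‖ξ‖ ^ 2 ≤ 2 * ε⁻¹ ^ 2 := by
    have : 1 ≤ ε⁻¹ := (one_le_inv₀ hε).mpr hε1
    nlinarith
  have hweight : 2 ^ (-α / 2) * ε ^ α ≤ (1 + ‖ξ‖ ^ 2) ^ (-α / 2) :=
    calc 2 ^ (-α / 2) * ε ^ α = (2 * ε⁻¹ ^ 2) ^ (-α / 2) := by
          rw [mul_rpow zero_le_two (by positivity), inv_pow, inv_rpow (by positivity),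
            ← rpow_natCast, ← rpow_mul hε.le, ← rpow_neg hε.le]
          ring_nf
      _ ≤ (1 + ‖ξ‖ ^ 2) ^ (-α / 2) :=
          rpow_le_rpow_of_nonpos (by positivity) hbracket (by linarith)
  exact mul_le_mul (sq_le_sin_mul_sq_div_sq hr hξpos (hrξ.trans (by linarith [pi_gt_three])))
    hweight (by positivity) (by positivity)

variable [MeasurableSpace E] [BorelSpace E]

lemma measurable_uncurry_waveBesselIntegrand (α : ℝ) :
    Measurable (Function.uncurry (waveBesselIntegrand (E := E) α)) := by
  unfold waveBesselIntegrand Function.uncurry; fun_prop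

variable [NormedSpace ℝ E] [FiniteDimensional ℝ E] (μ : Measure E) [μ.IsAddHaarMeasure]

lemma integrable_waveBesselIntegrand {α : ℝ} (hα : (finrank ℝ E : ℝ) - 2 < α) (r : ℝ) :
    Integrable (waveBesselIntegrand α r) μ := by
  have hmajorant := integrable_rpow_neg_one_add_norm_sq (μ := μ) (r := α + 2) (by linarith)
  refine (hmajorant.const_mul (1 + r ^ 2)).mono'
    ((measurable_uncurry_waveBesselIntegrand α).comp measurable_prodMk_left).aestronglyMeasurable
    (ae_of_all _ fun ξ => ?_)
  rw [norm_of_nonneg (waveBesselIntegrand_nonneg α r ξ)]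
  exact waveBesselIntegrand_le α r ξ

lemma integrableOn_integral_waveBesselIntegrand {α : ℝ} (hα : (finrank ℝ E : ℝ) - 2 < α)
    (a b : ℝ) : IntegrableOn (fun r => ∫ ξ, waveBesselIntegrand α r ξ ∂μ) (Ioc a b) := by
  have hmajorant := integrable_rpow_neg_one_add_norm_sq (μ := μ) (r := α + 2) (by linarith)
  have hmeas : StronglyMeasurable fun r => ∫ ξ, waveBesselIntegrand α r ξ ∂μ :=
    (measurable_uncurry_waveBesselIntegrand α).stronglyMeasurable.integral_prod_right'
  have hbound : Continuous fun r : ℝ => (1 + r ^ 2) * ∫ ξ, (1 + ‖ξ‖ ^ 2) ^ (-(α + 2) / 2) ∂μ := by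
    fun_prop
  refine hbound.integrableOn_Ioc.mono' hmeas.aestronglyMeasurable (ae_of_all _ fun r => ?_)
  rw [norm_of_nonneg (integral_nonneg (waveBesselIntegrand_nonneg α r))]
  calc ∫ ξ, waveBesselIntegrand α r ξ ∂μ
      ≤ ∫ ξ, (1 + r ^ 2) * (1 + ‖ξ‖ ^ 2) ^ (-(α + 2) / 2) ∂μ :=
        integral_mono (integrable_waveBesselIntegrand μ hα r) (hmajorant.const_mul _)
          (waveBesselIntegrand_le α r)
    _ = (1 + r ^ 2) * ∫ ξ, (1 + ‖ξ‖ ^ 2) ^ (-(α + 2) / 2) ∂μ := integral_const_mul _ _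

lemma addHaar_real_closedBall_sdiff_zero [Nontrivial E] {R : ℝ} (hR : 0 ≤ R) :
    μ.real (closedBall (0 : E) R \ {0}) = R ^ finrank ℝ E * μ.real (ball 0 1) := by
  rw [measureReal_def, measure_sdiff_null (measure_singleton 0), ← measureReal_def,
    Measure.addHaar_real_closedBall μ 0 hR]

lemma le_setIntegral_integral_waveBesselIntegrand [Nontrivial E] {α ε : ℝ} (hα₀ : 0 ≤ α)
    (hα : (finrank ℝ E : ℝ) - 2 < α) (hε : 0 < ε) (hε1 : ε ≤ 1) :
    4 / (3 * π ^ 2) * 2 ^ (-α / 2) * μ.real (ball 0 1) * ε ^ (α + 3 - finrank ℝ E) ≤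
      ∫ r in Ioc 0 ε, ∫ ξ, waveBesselIntegrand α r ξ ∂μ := by
  set S := closedBall (0 : E) ε⁻¹ \ {0}
  set K := 2 ^ (-α / 2) * ε ^ α * (ε⁻¹ ^ finrank ℝ E * μ.real (ball (0 : E) 1))
  have hS : MeasurableSet S := measurableSet_closedBall.diff (measurableSet_singleton 0)
  have hSfin : μ S ≠ ⊤ :=
    ((measure_mono sdiff_subset).trans_lt (isCompact_closedBall 0 _).measure_lt_top).ne
  have hinner : ∀ r ∈ Ioc 0 ε, (2 / π * r) ^ 2 * K ≤ ∫ ξ, waveBesselIntegrand α r ξ ∂μ := by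
    rintro r ⟨hr, hrε⟩
    have hint := integrable_waveBesselIntegrand μ hα r
    calc (2 / π * r) ^ 2 * K = (2 / π * r) ^ 2 * (2 ^ (-α / 2) * ε ^ α) * μ.real S := by
          rw [addHaar_real_closedBall_sdiff_zero μ (by positivity)]; ring
      _ ≤ ∫ ξ in S, waveBesselIntegrand α r ξ ∂μ :=
          setIntegral_ge_of_const_le_real hS hSfin
            (fun ξ hξ => le_waveBesselIntegrand hα₀ hε hε1 hr.le hrε hξ) hint.integrableOn
      _ ≤ ∫ ξ, waveBesselIntegrand α r ξ ∂μ :=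
          setIntegral_le_integral hint (ae_of_all _ (waveBesselIntegrand_nonneg α r))
  have hpow : ε ^ (α + 3 - finrank ℝ E) = ε ^ α * ε ^ 3 * ε⁻¹ ^ finrank ℝ E := by
    rw [sub_eq_add_neg, rpow_add hε, rpow_add hε, rpow_neg hε.le, inv_pow, rpow_natCast]
    norm_cast
  calc 4 / (3 * π ^ 2) * 2 ^ (-α / 2) * μ.real (ball 0 1) * ε ^ (α + 3 - finrank ℝ E)
      = ∫ r in Ioc 0 ε, (2 / π * r) ^ 2 * K := by
        simp_rw [mul_pow, integral_mul_const, integral_const_mul,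
          ← intervalIntegral.integral_of_le hε.le, integral_pow, hpow, K]
        field_simp
        ring
    _ ≤ ∫ r in Ioc 0 ε, ∫ ξ, waveBesselIntegrand α r ξ ∂μ :=
        setIntegral_mono_on
          (by fun_prop : Continuous fun r : ℝ => (2 / π * r) ^ 2 * K).integrableOn_Ioc
          (integrableOn_integral_waveBesselIntegrand μ hα 0 ε) measurableSet_Ioc hinner

end

theorem stmt11_general (d : ℕ) (hd : d = 1 ∨ d = 2 ∨ d = 3) (α : ℝ)
    (hα0 : max ((d : ℝ) - 2) 0 < α) :
    ∃ C : ℝ, 0 < C ∧ ∀ ε : ℝ, 0 < ε → ε < 1 →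
      C * ε ^ (α + 3 - d) ≤
        ∫ r in Set.Ioc (0 : ℝ) ε,
          ∫ ξ : EuclideanSpace ℝ (Fin d),
            (Real.sin (r * ‖ξ‖)) ^ 2 / ‖ξ‖ ^ 2 * (1 + ‖ξ‖ ^ 2) ^ (-α / 2) := by
  have hfinrank : finrank ℝ (EuclideanSpace ℝ (Fin d)) = d := finrank_euclideanSpace_fin
  have : Nontrivial (EuclideanSpace ℝ (Fin d)) :=
    Module.nontrivial_of_finrank_pos (R := ℝ) (by omega)
  obtain ⟨hαd, hα₀⟩ := max_lt_iff.mp hα0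
  have hball : 0 < volume.real (ball (0 : EuclideanSpace ℝ (Fin d)) 1) :=
    ENNReal.toReal_pos (measure_ball_pos _ _ one_pos).ne' measure_ball_lt_top.ne
  refine ⟨4 / (3 * π ^ 2) * 2 ^ (-α / 2) * volume.real (ball (0 : EuclideanSpace ℝ (Fin d)) 1),
    by positivity, fun ε hε hε1 => ?_⟩
  have hbound := le_setIntegral_integral_waveBesselIntegrand volume hα₀.le
    (by rwa [hfinrank]) hε hε1.le
  rwa [hfinrank] at hbound

theorem stmt11 (d : ℕ) (hd : d = 1 ∨ d = 2 ∨ d = 3) (α : ℝ)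
    (hα0 : max ((d : ℝ) - 2) 0 < α) (hα1 : α < d) :
    ∃ C : ℝ, 0 < C ∧ ∀ ε : ℝ, 0 < ε → ε < 1 →
      C * ε ^ (α + 3 - d) ≤
        ∫ r in Set.Ioc (0 : ℝ) ε,
          ∫ ξ : EuclideanSpace ℝ (Fin d),
            (Real.sin (r * ‖ξ‖)) ^ 2 / ‖ξ‖ ^ 2 * (1 + ‖ξ‖ ^ 2) ^ (-α / 2) :=
  stmt11_general d hd α hα0
end
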